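/- arXiv:2305.03516 — 4 statements merged into one kernel-verified Lean document; each statement's English description precedes it below -/
import Mathlib

section
/- For any connected graph G, α_bn(G) < 2·α(G), where α_bn(G) is the maximum cost of a boundary independent broadcast. -/
open SimpleGraph Finset

/-- The eccentricity of a vertex: the maximum distance to any other vertex. -/
noncomputable def ecc {V : Type*} [Fintype V] (G : SimpleGraph V) (v : V) : ℕ :=
  Finset.univ.sup fun u => G.dist v u

/-- A broadcast: each vertex broadcasts with strength at most its eccentricity. -/
def IsBroadcast {V : Type*} [Fintype V] (G : SimpleGraph V) (f : V → ℕ) : Prop :=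
  ∀ v, f v ≤ ecc G v

/-- A boundary independent broadcast. -/
def IsBnIndep {V : Type*} [Fintype V] (G : SimpleGraph V) (f : V → ℕ) : Prop :=
  IsBroadcast G f ∧ ∀ u v, u ≠ v → 1 ≤ f u → 1 ≤ f v → f u + f v ≤ G.dist u v

/-- The maximum cost of a boundary independent broadcast. -/
noncomputable def alphaBn {V : Type*} [Fintype V] (G : SimpleGraph V) : ℕ :=
  sSup {k | ∃ f : V → ℕ, IsBnIndep G f ∧ ∑ v, f v = k}

/-- The independence number. -/
noncomputable def indepNum {V : Type*} [Fintype V] (G : SimpleGraph V) : ℕ :=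
  sSup {k | ∃ s : Finset V, (∀ u ∈ s, ∀ v ∈ s, u ≠ v → ¬ G.Adj u v) ∧ s.card = k}

namespace SimpleGraph.Walk

variable {V : Type*} {G : SimpleGraph V}

lemma dist_getVert_of_length_eq_dist {u v : V} (p : G.Walk u v) (hp : p.length = G.dist u v)
    {i : ℕ} (hi : i ≤ p.length) : G.dist u (p.getVert i) = i := by
  have h_take : G.dist u (p.getVert i) ≤ i := by simpa [hi] using dist_le (p.take i)
  have h_drop : G.dist (p.getVert i) v ≤ p.length - i := by simpa using dist_le (p.drop i)
  have := (p.drop i).reachable.dist_triangle_right u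
  omega

end SimpleGraph.Walk

section Packing

variable {V : Type*} [Fintype V] {G : SimpleGraph V}

lemma exists_dist_eq_of_le_ecc (hG : G.Connected) {v : V} {i : ℕ} (hi : i ≤ ecc G v) :
    ∃ x, G.dist v x = i := by
  obtain ⟨u, -, hu⟩ := exists_mem_eq_sup univ ⟨v, mem_univ v⟩ (G.dist v ·)
  obtain ⟨p, hp⟩ := hG.exists_walk_length_eq_dist v u
  exact ⟨p.getVert i, p.dist_getVert_of_length_eq_dist hp (by rw [hp, ← hu]; exact hi)⟩

lemma card_le_indepNum {s : Finset V} (hs : ∀ u ∈ s, ∀ v ∈ s, u ≠ v → ¬ G.Adj u v) :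
    s.card ≤ _root_.indepNum G :=
  le_csSup ⟨Fintype.card V, by rintro _ ⟨t, -, rfl⟩; exact t.card_le_univ⟩ ⟨s, hs, rfl⟩

/-- Witness: the vertices at distance `0, 2, …, 2 k w` from the centres `w ∈ S`, which are
pairwise at distance at least `2`. -/
lemma sum_succ_le_indepNum (hG : G.Connected) (S : Finset V) (k : V → ℕ)
    (hk : ∀ w ∈ S, 2 * k w ≤ ecc G w)
    (hsep : ∀ w ∈ S, ∀ w' ∈ S, w ≠ w' → 2 * k w + 2 * k w' + 2 ≤ G.dist w w') :
    ∑ w ∈ S, (k w + 1) ≤ _root_.indepNum G := by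
  classical
  have hx : ∀ w ∈ S, ∀ j < k w + 1, ∃ x, G.dist w x = 2 * j := fun w hw j hj =>
    exists_dist_eq_of_le_ecc hG ((Nat.mul_le_mul_left 2 (Nat.le_of_lt_succ hj)).trans (hk w hw))
  choose! x hx using hx
  set I := S.sigma fun w => range (k w + 1)
  have hfar : ∀ p ∈ I, ∀ q ∈ I, p ≠ q → 2 ≤ G.dist (x p.1 p.2) (x q.1 q.2) := by
    rintro ⟨w, j⟩ hp ⟨w', j'⟩ hq hne
    simp only [I, mem_sigma, mem_range] at hp hq ⊢
    have hd := hx w hp.1 j hp.2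
    have hd' := hx w' hq.1 j' hq.2
    have hcomm : G.dist (x w' j') (x w j) = G.dist (x w j) (x w' j') := dist_comm
    by_cases hww : w = w'
    · subst hww
      have hjj : j ≠ j' := fun h => hne (h ▸ rfl)
      have := hG.dist_triangle (u := w) (v := x w j) (w := x w j')
      have := hG.dist_triangle (u := w) (v := x w j') (w := x w j)
      omega
    · have := hsep w hp.1 w' hq.1 hww
      have := hG.dist_triangle (u := w) (v := x w j) (w := w')
      have := hG.dist_triangle (u := x w j) (v := x w' j') (w := w')
      have : G.dist (x w' j') w' = G.dist w' (x w' j') := dist_comm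
      omega
  have hinj : Set.InjOn (fun p : (_ : V) × ℕ => x p.1 p.2) I := fun p hp q hq hpq => by
    by_contra hne
    have := hfar p hp q hq hne
    simp_all
  calc ∑ w ∈ S, (k w + 1) = (I.image fun p => x p.1 p.2).card := by
        rw [card_image_of_injOn hinj, card_sigma]; simp
    _ ≤ _root_.indepNum G := card_le_indepNum <| by
        simp only [mem_image]
        rintro _ ⟨p, hp, rfl⟩ _ ⟨q, hq, rfl⟩ hne hadj
        have := hfar p hp q hq (fun h => hne (h ▸ rfl))
        rw [dist_eq_one_iff_adj.mpr hadj] at this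
        omega

end Packing

section Broadcast

variable {V : Type*} [Fintype V] {G : SimpleGraph V}

lemma exists_isBnIndep_sum_eq_alphaBn : ∃ f, IsBnIndep G f ∧ ∑ v, f v = alphaBn G :=
  Nat.sSup_mem (s := {k | ∃ f : V → ℕ, IsBnIndep G f ∧ ∑ v, f v = k})
    ⟨0, fun _ => 0, ⟨fun _ => Nat.zero_le _, fun _ _ _ h => by simp at h⟩, by simp⟩
    ⟨∑ v, ecc G v, by rintro _ ⟨f, hf, rfl⟩; exact sum_le_sum fun v _ => hf.1 v⟩

/-- Each broadcasting vertex `w` contributes `⌈f w / 2⌉` vertices at even distances `< f w`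
from it; one vertex `u` additionally contributes the vertex at distance `f u`, which is where
the strict inequality comes from. This extra vertex stays two steps away from the other packings
when `f u` is odd or every `f w` is even, and such a `u` exists. -/
lemma IsBnIndep.sum_lt_two_mul_indepNum (hG : G.Connected) {f : V → ℕ} (hf : IsBnIndep G f) :
    ∑ v, f v < 2 * _root_.indepNum G := by
  classical
  by_cases h0 : ∀ v, f v = 0
  · obtain ⟨v⟩ := hG.nonempty
    have := card_le_indepNum (G := G) (s := {v}) (by simp)
    simp only [h0, sum_const_zero, card_singleton] at this ⊢
    omega
  obtain ⟨u, hu, hpar⟩ : ∃ u, 1 ≤ f u ∧ (f u % 2 = 1 ∨ ∀ w, f w % 2 = 0) := by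
    by_cases hodd : ∃ u, f u % 2 = 1
    · obtain ⟨u, hu⟩ := hodd
      exact ⟨u, by omega, .inl hu⟩
    · push Not at h0 hodd
      obtain ⟨u, hu⟩ := h0
      exact ⟨u, by omega, .inr fun w => by have := hodd w; omega⟩
  set S := univ.filter (1 ≤ f ·)
  set k : V → ℕ := fun w => if w = u then f w / 2 else (f w - 1) / 2
  have hk : ∀ w ∈ S, 2 * k w ≤ ecc G w := fun w _ =>
    le_trans (by simp only [k]; split_ifs <;> omega) (hf.1 w)
  have hsep : ∀ w ∈ S, ∀ w' ∈ S, w ≠ w' → 2 * k w + 2 * k w' + 2 ≤ G.dist w w' := by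
    intro w hw w' hw' hne
    simp only [S, mem_filter, mem_univ, true_and] at hw hw'
    refine le_trans ?_ (hf.2 w w' hne hw hw')
    simp only [k]
    split_ifs <;> grind
  calc ∑ v, f v = ∑ w ∈ S, f w := (sum_filter_of_ne fun w _ hw => by omega).symm
    _ < ∑ w ∈ S, 2 * (k w + 1) := by
        refine sum_lt_sum (fun w _ => ?_) ⟨u, by simpa [S] using hu, ?_⟩
        · simp only [k]; split_ifs <;> omega
        · simp only [k, if_pos rfl]; omega
    _ = 2 * ∑ w ∈ S, (k w + 1) := (mul_sum ..).symm
    _ ≤ 2 * _root_.indepNum G := Nat.mul_le_mul_left 2 (sum_succ_le_indepNum hG S k hk hsep)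

end Broadcast

theorem alphaBn_lt_two_mul_indepNum {V : Type*} [Fintype V]
    (G : SimpleGraph V) (hG : G.Connected) :
    alphaBn G < 2 * _root_.indepNum G := by
  obtain ⟨f, hf, hsum⟩ := exists_isBnIndep_sum_eq_alphaBn (G := G)
  exact hsum ▸ hf.sum_lt_two_mul_indepNum hG
end

section
/- For any tree T of order n ≥ 2, α_bn(T) ≤ n − 1. -/
open SimpleGraph Finset

private lemma dist_getVert_le {V : Type*} {G : SimpleGraph V} (hc : G.Connected) :
    ∀ {v u : V} (p : G.Walk v u) (i : ℕ), G.dist v (p.getVert i) ≤ i := by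
  intro v u p
  induction p with
  | nil => intro i; simp [SimpleGraph.Walk.getVert, SimpleGraph.dist_self]
  | cons h q ih =>
    intro i
    cases i with
    | zero => simp [SimpleGraph.Walk.getVert]
    | succ n =>
      rw [SimpleGraph.Walk.getVert_cons_succ]
      calc G.dist _ _ ≤ G.dist _ _ + G.dist _ _ := hc.dist_triangle
        _ ≤ 1 + n := by
            gcongr
            · exact (SimpleGraph.dist_le (SimpleGraph.Walk.cons h .nil)).trans (by simp)
            · exact ih n
        _ = n + 1 := by omega

private lemma dist_getVert_right_le {V : Type*} {G : SimpleGraph V} :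
    ∀ {v u : V} (p : G.Walk v u) (i : ℕ), G.dist (p.getVert i) u ≤ p.length - i := by
  intro v u p
  induction p with
  | nil => intro i; simp [SimpleGraph.Walk.getVert]
  | cons h q ih =>
    intro i
    cases i with
    | zero =>
      simp only [SimpleGraph.Walk.getVert_zero, SimpleGraph.Walk.length_cons, Nat.sub_zero]
      exact SimpleGraph.dist_le (SimpleGraph.Walk.cons h q)
    | succ n =>
      rw [SimpleGraph.Walk.getVert_cons_succ]
      simpa using ih n

/-- On a geodesic walk, the `i`-th vertex is at distance exactly `i` from the start. -/
private lemma dist_getVert_eq {V : Type*} {G : SimpleGraph V} (hc : G.Connected)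
    {v u : V} (p : G.Walk v u)
    (hp : p.length = G.dist v u) {i : ℕ} (hi : i ≤ p.length) :
    G.dist v (p.getVert i) = i := by
  have h1 := dist_getVert_le hc p i
  have h2 := dist_getVert_right_le p i
  have h3 : G.dist v u ≤ G.dist v (p.getVert i) + G.dist (p.getVert i) u := hc.dist_triangle
  omega

theorem alphaBn_tree_le {V : Type*} [Fintype V]
    (T : SimpleGraph V) (hT : T.IsTree) (hn : 2 ≤ Fintype.card V) :
    alphaBn T ≤ Fintype.card V - 1 := by
  classical
  have hconn : T.Connected := hT.isConnected
  apply csSup_le'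
  rintro k ⟨f, ⟨hbr, hbi⟩, rfl⟩
  -- choose, for each vertex, a geodesic walk witnessing its eccentricity
  haveI : Nonempty V := Fintype.card_pos_iff.mp (by omega)
  have hne : (Finset.univ : Finset V).Nonempty := Finset.univ_nonempty
  have hexists : ∀ v : V, ∃ (u : V) (p : T.Walk v u), p.length = T.dist v u ∧ f v ≤ p.length := by
    intro v
    obtain ⟨u, -, hu⟩ := Finset.exists_mem_eq_sup Finset.univ hne (fun u => T.dist v u)
    obtain ⟨p, hp⟩ := (hconn.preconnected v u).exists_walk_length_eq_dist
    refine ⟨u, p, hp, ?_⟩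
    have := hbr v
    unfold ecc at this
    rw [hu] at this
    omega
  choose U P hP hlen using hexists
  have hlen : ∀ v, f v ≤ (P v).length := hlen
  -- distances along the geodesics
  have hd : ∀ v, ∀ i ≤ (P v).length, T.dist v ((P v).getVert i) = i := by
    intro v i hi; exact dist_getVert_eq hconn (P v) (hP v) hi
  -- the edge map
  haveI : Fintype T.edgeSet := Fintype.ofFinite _
  set S : Finset ((_ : V) × ℕ) := Finset.univ.sigma (fun v => Finset.range (f v)) with hS
  have hcard : ∑ v, f v = S.card := by
    rw [hS, Finset.card_sigma]
    simp
  rw [hcard]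
  have hkey : ∀ v, ∀ i < f v, ∀ x, (x = (P v).getVert i ∨ x = (P v).getVert (i+1)) →
      T.dist v x ≤ i + 1 := by
    rintro v i hi x (rfl | rfl)
    · have := hd v i ((hlen v).trans' hi.le); omega
    · have := hd v (i+1) (le_trans hi (hlen v)); omega
  have hinj : Set.InjOn (fun q : (_ : V) × ℕ => s((P q.1).getVert q.2, (P q.1).getVert (q.2+1)))
      S := by
    rintro ⟨v, i⟩ hv ⟨w, j⟩ hw heq
    simp only [hS, Finset.mem_coe, Finset.mem_sigma, Finset.mem_univ, Finset.mem_range, true_and] at hv hw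
    simp only [Sym2.eq, Sym2.rel_iff', Prod.mk.injEq, Prod.swap_prod_mk] at heq
    have hiv : i + 1 ≤ (P v).length := le_trans hv (hlen v)
    have hjw : j + 1 ≤ (P w).length := le_trans hw (hlen w)
    by_cases hvw : v = w
    · subst hvw
      rcases heq with ⟨h1, h2⟩ | ⟨h1, h2⟩
      · have := hd v i (by omega)
        have h' := hd v j (by omega)
        rw [h1] at this; rw [h'] at this
        simp [this]
      · have e1 : T.dist v ((P v).getVert i) = i := hd v i (by omega)
        have e2 : T.dist v ((P v).getVert (j+1)) = j+1 := hd v (j+1) (by omega)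
        have e3 : T.dist v ((P v).getVert (i+1)) = i+1 := hd v (i+1) (by omega)
        have e4 : T.dist v ((P v).getVert j) = j := hd v j (by omega)
        rw [h1] at e1; rw [e2] at e1
        rw [h2] at e3; rw [e4] at e3
        omega
    · exfalso
      have hfv : 1 ≤ f v := by omega
      have hfw : 1 ≤ f w := by omega
      have hdvw := hbi v w hvw hfv hfw
      -- both endpoints force distance i+1 from v, contradiction
      have key : ∀ x, (x = (P v).getVert i ∨ x = (P v).getVert (i+1)) →
          (x = (P w).getVert j ∨ x = (P w).getVert (j+1)) → T.dist v x = i + 1 := by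
        intro x hx hwx
        have h1 : T.dist v x ≤ i + 1 := hkey v i hv x hx
        have h2 : T.dist w x ≤ j + 1 := hkey w j hw x hwx
        have h3 : T.dist v w ≤ T.dist v x + T.dist x w := hconn.dist_triangle
        have h2' : T.dist x w ≤ j + 1 := by rw [SimpleGraph.dist_comm]; exact h2
        omega
      have e1 : T.dist v ((P v).getVert i) = i := hd v i (by omega)
      have e3 : T.dist v ((P v).getVert (i+1)) = i+1 := hd v (i+1) (by omega)
      rcases heq with ⟨h1, h2⟩ | ⟨h1, h2⟩
      · have := key ((P v).getVert i) (Or.inl rfl) (Or.inl h1)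
        omega
      · have := key ((P v).getVert i) (Or.inl rfl) (Or.inr h1)
        omega
  have hmaps : ∀ q ∈ S, (fun q : (_ : V) × ℕ =>
      s((P q.1).getVert q.2, (P q.1).getVert (q.2+1))) q ∈ T.edgeFinset := by
    rintro ⟨v, i⟩ hv
    simp only [hS, Finset.mem_sigma, Finset.mem_univ, Finset.mem_range, true_and] at hv
    rw [SimpleGraph.mem_edgeFinset]
    exact (P v).adj_getVert_succ (lt_of_lt_of_le hv (hlen v))
  have hle : S.card ≤ T.edgeFinset.card := Finset.card_le_card_of_injOn _ hmaps hinj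
  have := hT.card_edgeFinset
  omega
end

section
/- For the path P_n on n ≥ 2 vertices, α_bn(P_n) = n − 1: the broadcast assigning strength n−1 to one endpoint is boundary independent of cost n−1, and no boundary independent broadcast has greater cost. -/
open SimpleGraph Finset

/-!
A vertex `v` broadcasting with strength `f v ≤ ecc v` covers the edges having an endpoint at
distance less than `f v` from `v`; the first `f v` edges of a geodesic from `v` to a farthest
vertex show that there are at least `f v` of them. Boundary independence makes the sets of edges
covered by different broadcasting vertices disjoint, so the cost of a boundary independent
broadcast on a connected graph is at most its number of edges, which is `n - 1` for `P_n`. The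
endpoint broadcast attains this bound.
-/

namespace SimpleGraph

variable {V : Type*} {G : SimpleGraph V}

lemma Walk.exists_mem_dist_lt_length_of_mem_edges {u v : V} (p : G.Walk u v) {e : Sym2 V}
    (he : e ∈ p.edges) : ∃ x ∈ e, G.dist u x < p.length := by
  obtain ⟨i, hi, rfl⟩ := List.mem_iff_getElem.mp he
  refine ⟨p.getVert i, by simp [Walk.getElem_edges], ?_⟩
  calc G.dist u (p.getVert i) ≤ (p.take i).length := dist_le _
    _ ≤ i := by simp [Walk.take_length]
    _ < p.length := by simpa using hi

lemma dist_le_one_of_mem_edgeSet {e : Sym2 V} (he : e ∈ G.edgeSet) {x y : V}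
    (hx : x ∈ e) (hy : y ∈ e) : G.dist x y ≤ 1 := by
  rcases eq_or_ne x y with rfl | hxy
  · simp
  · obtain rfl := (Sym2.mem_and_mem_iff hxy).mp ⟨hx, hy⟩
    exact (dist_eq_one_iff_adj.mpr he).le

section Broadcast

variable [Fintype V]

lemma dist_le_ecc (G : SimpleGraph V) (v u : V) : G.dist v u ≤ ecc G v :=
  Finset.le_sup (f := fun u => G.dist v u) (Finset.mem_univ u)

lemma isBnIndep_single [DecidableEq V] {v : V} {k : ℕ} (hk : k ≤ ecc G v) :
    IsBnIndep G (Pi.single v k) := by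
  refine ⟨fun u => ?_, fun u w huw hu hw => ?_⟩
  · rcases eq_or_ne u v with rfl | huv
    · simpa using hk
    · simp [huv]
  · have hu_eq : u = v := by by_contra h; simp [h] at hu
    have hw_eq : w = v := by by_contra h; simp [h] at hw
    exact absurd (hu_eq.trans hw_eq.symm) huw

variable [DecidableEq V] [DecidableRel G.Adj]

variable (G) in
/-- The edges covered by a vertex `v` broadcasting with strength `k`. -/
noncomputable def coveredEdges (v : V) (k : ℕ) : Finset (Sym2 V) :=
  {e ∈ G.edgeFinset | ∃ x ∈ e, G.dist v x < k}

@[simp]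
lemma coveredEdges_zero (v : V) : G.coveredEdges v 0 = ∅ := by
  simp [coveredEdges]

lemma disjoint_coveredEdges (hG : G.Preconnected) {u v : V} {k l : ℕ}
    (h : k + l ≤ G.dist u v) : Disjoint (G.coveredEdges u k) (G.coveredEdges v l) := by
  refine Finset.disjoint_left.mpr fun e heu hev => ?_
  simp only [coveredEdges, Finset.mem_filter, mem_edgeFinset] at heu hev
  obtain ⟨he, x, hx, hux⟩ := heu
  obtain ⟨-, y, hy, hvy⟩ := hev
  have hxy := dist_le_one_of_mem_edgeSet he hx hy
  have hux_v := (hG u x).dist_triangle_left v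
  have hxv := (hG x y).dist_triangle_left v
  rw [dist_comm (u := y)] at hxv
  omega

lemma le_card_coveredEdges (hG : G.Preconnected) {v : V} {k : ℕ} (hk : k ≤ ecc G v) :
    k ≤ #(G.coveredEdges v k) := by
  obtain ⟨u, -, hu⟩ := Finset.exists_mem_eq_sup Finset.univ ⟨v, Finset.mem_univ v⟩
    (fun u => G.dist v u)
  obtain ⟨p, hp, hpu⟩ := (hG v u).exists_path_of_dist
  have hlen : (p.take k).length = k := by
    rw [Walk.take_length, hpu, ← hu]
    exact min_eq_left hk
  have hnodup : (p.take k).edges.Nodup := by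
    rw [Walk.edges_take]
    exact hp.isTrail.edges_nodup.sublist (List.take_sublist _ _)
  calc k = #(p.take k).edges.toFinset := by
        rw [List.toFinset_card_of_nodup hnodup, Walk.length_edges, hlen]
    _ ≤ #(G.coveredEdges v k) := by
        refine Finset.card_le_card fun e he => ?_
        rw [List.mem_toFinset] at he
        simp only [coveredEdges, Finset.mem_filter, mem_edgeFinset]
        exact ⟨(p.take k).edges_subset_edgeSet he,
          hlen ▸ (p.take k).exists_mem_dist_lt_length_of_mem_edges he⟩

theorem IsBnIndep.sum_le_card_edgeFinset (hG : G.Preconnected) {f : V → ℕ}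
    (hf : IsBnIndep G f) : ∑ v, f v ≤ #G.edgeFinset := by
  have hdisj : Set.PairwiseDisjoint ↑(Finset.univ : Finset V)
      fun v => G.coveredEdges v (f v) := by
    intro u _ v _ huv
    change Disjoint _ _
    rcases Nat.eq_zero_or_pos (f u) with hu | hu
    · simp [hu]
    rcases Nat.eq_zero_or_pos (f v) with hv | hv
    · simp [hv]
    exact disjoint_coveredEdges hG (hf.2 u v huv hu hv)
  calc ∑ v, f v ≤ ∑ v, #(G.coveredEdges v (f v)) :=
        Finset.sum_le_sum fun v _ => le_card_coveredEdges hG (hf.1 v)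
    _ = #(Finset.univ.biUnion fun v => G.coveredEdges v (f v)) :=
        (Finset.card_biUnion hdisj).symm
    _ ≤ #G.edgeFinset :=
        Finset.card_le_card <| Finset.biUnion_subset.mpr fun v _ => Finset.filter_subset _ _

end Broadcast

lemma pathGraph_sub_le_walk_length {n : ℕ} {u v : Fin n} (p : (pathGraph n).Walk u v) :
    v.val - u.val ≤ p.length := by
  induction p with
  | nil => simp
  | cons h _ ih =>
    rw [pathGraph_adj] at h
    rw [Walk.length_cons]
    omega

lemma pathGraph_sub_le_dist {n : ℕ} (u v : Fin n) : v.val - u.val ≤ (pathGraph n).dist u v := by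
  obtain ⟨p, hp⟩ := (pathGraph_preconnected n u v).exists_walk_length_eq_dist
  exact hp ▸ pathGraph_sub_le_walk_length p

lemma pathGraph_sup_val_eq_inf_val_add_one {n : ℕ} {e : Sym2 (Fin n)}
    (he : e ∈ (pathGraph n).edgeSet) : e.sup.val = e.inf.val + 1 := by
  induction e using Sym2.ind with
  | h a b =>
    rw [mem_edgeSet, pathGraph_adj] at he
    simp only [Sym2.sup_mk, Sym2.inf_mk, Fin.coe_max, Fin.coe_min]
    omega

lemma card_edgeFinset_pathGraph_le (n : ℕ) [DecidableRel (pathGraph n).Adj] :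
    #(pathGraph n).edgeFinset ≤ n - 1 := by
  calc #(pathGraph n).edgeFinset ≤ #(Finset.range (n - 1)) := by
        refine Finset.card_le_card_of_injOn (fun e => e.inf.val) (fun e he => ?_) ?_
        · have := pathGraph_sup_val_eq_inf_val_add_one (mem_edgeFinset.mp he)
          have := e.sup.isLt
          simp only [Finset.coe_range, Set.mem_Iio]
          omega
        · intro e he e' he' h
          have hsup := pathGraph_sup_val_eq_inf_val_add_one (mem_edgeFinset.mp he)
          have hsup' := pathGraph_sup_val_eq_inf_val_add_one (mem_edgeFinset.mp he')
          simp only at h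
          exact Sym2.inf_eq_inf_and_sup_eq_sup.mp ⟨Fin.ext h, Fin.ext (by omega)⟩
    _ = n - 1 := Finset.card_range _

end SimpleGraph

theorem alphaBn_pathGraph (n : ℕ) (hn : 2 ≤ n)
    (f : Fin n → ℕ)
    (hf : f = fun i => if i = (⟨0, by omega⟩ : Fin n) then n - 1 else 0) :
    IsBnIndep (pathGraph n) f ∧ (∑ i, f i = n - 1) ∧
      alphaBn (pathGraph n) = n - 1 := by
  classical
  have hf_single : f = Pi.single ⟨0, by omega⟩ (n - 1) := by
    ext i
    simp [hf, Pi.single_apply]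
  have hecc : n - 1 ≤ ecc (pathGraph n) ⟨0, by omega⟩ :=
    (pathGraph_sub_le_dist (n := n) ⟨0, by omega⟩ ⟨n - 1, by omega⟩).trans (dist_le_ecc _ _ _)
  have hindep : IsBnIndep (pathGraph n) f := hf_single ▸ isBnIndep_single hecc
  have hsum : ∑ i, f i = n - 1 := by simp [hf_single]
  refine ⟨hindep, hsum, IsGreatest.csSup_eq ⟨⟨f, hindep, hsum⟩, ?_⟩⟩
  rintro _ ⟨g, hg, rfl⟩
  exact (hg.sum_le_card_edgeFinset (pathGraph_preconnected n)).trans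
    (card_edgeFinset_pathGraph_le n)
end

section
/- Verifying boundary independence reduces to pairwise distance checks: a broadcast f on a connected graph G is boundary independent if and only if, for every pair of distinct broadcasting vertices u and v, f(u) + f(v) ≤ d_G(u, v). Consequently, if f is boundary independent then any u hearing two distinct broadcasting vertices v, w (d(u,v) ≤ f(v) and d(u,w) ≤ f(w)) satisfies d(u,v) = f(v) and d(u,w) = f(w). -/
open SimpleGraph Finset

/-! A pair of broadcasting vertices `u ≠ v` with `d(u,v) < f(u) + f(v)` is witnessed by a vertex `x`
on a `u`–`v` geodesic with `d(u,x) < f(u)` and `d(x,v) ≤ f(v)`: `x` lies strictly inside the ball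
of `u` and still hears `v`. Conversely, if `f(v) + f(w) ≤ d(v,w)`, the triangle inequality through a
vertex hearing both `v` and `w` forces both of its distances to be exact. -/

namespace SimpleGraph

variable {V : Type*} {G : SimpleGraph V}

theorem Reachable.exists_dist_le_le_of_dist_le_add {u v : V} (h : G.Reachable u v) {a b : ℕ}
    (hab : G.dist u v ≤ a + b) : ∃ x, G.dist u x ≤ a ∧ G.dist x v ≤ b := by
  obtain ⟨p, hp⟩ := h.exists_walk_length_eq_dist
  refine ⟨p.getVert a, ?_, ?_⟩
  · calc G.dist u (p.getVert a) ≤ (p.take a).length := dist_le _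
      _ ≤ a := by rw [Walk.take_length]; exact min_le_left _ _
  · calc G.dist (p.getVert a) v ≤ (p.drop a).length := dist_le _
      _ ≤ b := by rw [Walk.drop_length]; omega

theorem Connected.dist_eq_of_add_le_dist (hG : G.Connected) {u v w : V} {a b : ℕ}
    (hvw : a + b ≤ G.dist v w) (hv : G.dist u v ≤ a) (hw : G.dist u w ≤ b) :
    G.dist u v = a ∧ G.dist u w = b := by
  have := hG.dist_triangle (u := v) (v := u) (w := w)
  have := G.dist_comm (u := u) (v := v)
  omega

end SimpleGraph

theorem bnIndep_iff_pairwise_dist_general {V : Type*} [Fintype V]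
    (G : SimpleGraph V) (hG : G.Connected) (f : V → ℕ) :
    ((∀ v, 1 ≤ f v → ∀ u, G.dist u v < f v →
        ∀ w, w ≠ v → 1 ≤ f w → ¬ G.dist u w ≤ f w) ↔
      (∀ u v, u ≠ v → 1 ≤ f u → 1 ≤ f v → f u + f v ≤ G.dist u v)) ∧
    (IsBnIndep G f → ∀ u v w, v ≠ w → 1 ≤ f v → 1 ≤ f w →
      G.dist u v ≤ f v → G.dist u w ≤ f w →
      G.dist u v = f v ∧ G.dist u w = f w) := by
  have hear_exact : (∀ u v, u ≠ v → 1 ≤ f u → 1 ≤ f v → f u + f v ≤ G.dist u v) →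
      ∀ u v w, v ≠ w → 1 ≤ f v → 1 ≤ f w → G.dist u v ≤ f v → G.dist u w ≤ f w →
        G.dist u v = f v ∧ G.dist u w = f w :=
    fun h u v w hvw hfv hfw => hG.dist_eq_of_add_le_dist (h v w hvw hfv hfw)
  refine ⟨⟨fun h u v huv hfu hfv => ?_, fun h v hfv u huv w hwv hfw huw => ?_⟩,
    fun hf => hear_exact hf.2⟩
  · by_contra! hlt
    obtain ⟨x, hxu, hxv⟩ := (hG u v).exists_dist_le_le_of_dist_le_add
      (a := f u - 1) (b := f v) (by omega)
    exact h u hfu x (by rw [dist_comm]; omega) v huv.symm hfv hxv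
  · exact huv.ne (hear_exact h u v w hwv.symm hfv hfw huv.le huw).1

theorem bnIndep_iff_pairwise_dist {V : Type*} [Fintype V]
    (G : SimpleGraph V) (hG : G.Connected) (f : V → ℕ) (hb : IsBroadcast G f) :
    ((∀ v, 1 ≤ f v → ∀ u, G.dist u v < f v →
        ∀ w, w ≠ v → 1 ≤ f w → ¬ G.dist u w ≤ f w) ↔
      (∀ u v, u ≠ v → 1 ≤ f u → 1 ≤ f v → f u + f v ≤ G.dist u v)) ∧
    (IsBnIndep G f → ∀ u v w, v ≠ w → 1 ≤ f v → 1 ≤ f w →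
      G.dist u v ≤ f v → G.dist u w ≤ f w →
      G.dist u v = f v ∧ G.dist u w = f w) :=
  bnIndep_iff_pairwise_dist_general G hG f
end
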